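/- Every (d,λ)-expander graph G satisfies κ(G) ≥ (1 − λ)d, where κ(G) is the vertex connectivity. -/

import Mathlib

open Matrix Finset

/-- An orthonormal eigenbasis of a real symmetric matrix, with eigenvalues listed in
decreasing order (with multiplicity). -/
def EigSystem {ι : Type} [Fintype ι] {k : ℕ} (M : Matrix ι ι ℝ)
    (μ : Fin k → ℝ) (φ : Fin k → ι → ℝ) : Prop :=
  Fintype.card ι = k ∧
  (∀ a b, ∑ i, φ a i * φ b i = if a = b then (1 : ℝ) else 0) ∧
  (∀ a, M.mulVec (φ a) = μ a • φ a) ∧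
  (∀ a b : Fin k, a ≤ b → μ b ≤ μ a)

/-! Let `L = d • 1 - A` be the Laplacian of `G`. A vertex cut `K` splitting `G - K` yields a
vector `x ≠ 0` with `∑ x = 0`, vanishing on `K` and constant on the components of `G - K`. Only
the edges between `K` and its complement contribute to `xᵀ L x`, and each vertex has at most `|K|`
of them, so `xᵀ L x ≤ |K| ‖x‖²`. On the other hand the constant vector is an eigenvector of `A / d`
for its top eigenvalue `1`, so on its orthogonal complement `A / d ≤ μ₁` and
`xᵀ L x ≥ (1 - μ₁) d ‖x‖²`. -/

namespace EigSystem

variable {ι : Type} [Fintype ι] {k : ℕ} {M : Matrix ι ι ℝ} {μ : Fin k → ℝ} {φ : Fin k → ι → ℝ}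

theorem transpose_mul_self [DecidableEq ι] (h : EigSystem M μ φ) :
    (Matrix.of φ)ᵀ * Matrix.of φ = 1 := by
  have hΦ : Matrix.of φ * (Matrix.of φ)ᵀ = 1 := by
    ext a b
    simp [Matrix.mul_apply, Matrix.one_apply, h.2.1 a b]
  exact (mul_eq_one_comm_of_equiv (Fintype.equivFinOfCardEq h.1).symm).mp hΦ

theorem eq_sum_smul (h : EigSystem M μ φ) (x : ι → ℝ) : x = ∑ a, (φ a ⬝ᵥ x) • φ a := by
  classical
  have hx := congrArg (· *ᵥ x) (transpose_mul_self h)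
  simp only [← mulVec_mulVec, one_mulVec] at hx
  conv_lhs => rw [← hx]
  ext i
  simp [mulVec, dotProduct, Finset.sum_apply, mul_comm]

theorem dotProduct_eq_sum (h : EigSystem M μ φ) (x y : ι → ℝ) :
    x ⬝ᵥ y = ∑ a, (φ a ⬝ᵥ x) * (φ a ⬝ᵥ y) := by
  conv_lhs => rw [dotProduct_comm, h.eq_sum_smul y]
  simp only [sum_dotProduct, smul_dotProduct, smul_eq_mul, mul_comm]

theorem dotProduct_mulVec_eq_sum (h : EigSystem M μ φ) (x y : ι → ℝ) :
    x ⬝ᵥ M *ᵥ y = ∑ a, μ a * (φ a ⬝ᵥ x) * (φ a ⬝ᵥ y) := by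
  conv_lhs => rw [h.eq_sum_smul y]
  simp only [mulVec_sum, mulVec_smul, h.2.2.1, dotProduct_sum, dotProduct_smul, smul_eq_mul]
  exact Finset.sum_congr rfl fun a _ => by rw [dotProduct_comm x]; ring

theorem dotProduct_mulVec_le_of_dotProduct_eq_zero (h : EigSystem M μ φ) (hk : 2 ≤ k) {ν : ℝ}
    {v : ι → ℝ} (hv : v ≠ 0) (hMv : M *ᵥ v = ν • v) (hν : μ ⟨0, by omega⟩ ≤ ν)
    {x : ι → ℝ} (hx : v ⬝ᵥ x = 0) : x ⬝ᵥ M *ᵥ x ≤ μ ⟨1, hk⟩ * (x ⬝ᵥ x) := by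
  set a₀ : Fin k := ⟨0, by omega⟩
  set a₁ : Fin k := ⟨1, hk⟩
  set c := fun a => φ a ⬝ᵥ x
  set b := fun a => φ a ⬝ᵥ v
  have hμ₀ : ∀ a, μ a ≤ μ a₀ := fun a => h.2.2.2 _ _ (Fin.le_def.mpr (Nat.zero_le _))
  have hμ₁ : ∀ a ≠ a₀, μ a ≤ μ a₁ := fun a ha =>
    h.2.2.2 _ _ (Fin.le_def.mpr (Nat.one_le_iff_ne_zero.mpr (Fin.val_ne_iff.mpr ha)))
  have hform : x ⬝ᵥ M *ᵥ x - μ a₁ * (x ⬝ᵥ x) = ∑ a, (μ a - μ a₁) * c a ^ 2 := by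
    rw [h.dotProduct_mulVec_eq_sum, h.dotProduct_eq_sum, mul_sum, ← sum_sub_distrib]
    exact sum_congr rfl fun a _ => by ring
  have hrest : ∑ a ∈ univ.erase a₀, (μ a - μ a₁) * c a ^ 2 ≤ 0 :=
    sum_nonpos fun a ha =>
      mul_nonpos_of_nonpos_of_nonneg (sub_nonpos.mpr (hμ₁ a (ne_of_mem_erase ha))) (sq_nonneg _)
  rw [← add_sum_erase _ _ (mem_univ a₀)] at hform
  suffices (μ a₀ - μ a₁) * c a₀ ^ 2 ≤ 0 by linarith
  rcases le_or_gt (μ a₀) (μ a₁) with h₀₁ | h₀₁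
  · exact mul_nonpos_of_nonpos_of_nonneg (sub_nonpos.mpr h₀₁) (sq_nonneg _)
  suffices c a₀ = 0 by simp [this]
  -- Since `ν ≥ μ₀ > μ₁`, the eigenvector `v` can only have a component along `φ a₀`.
  have hb : ∀ a ≠ a₀, b a = 0 := by
    have hzero : ∑ a, (ν - μ a) * b a ^ 2 = 0 := by
      have hvv := h.dotProduct_mulVec_eq_sum v v
      rw [hMv, dotProduct_smul, smul_eq_mul, h.dotProduct_eq_sum, mul_sum] at hvv
      rw [← sub_eq_zero.mpr hvv, ← sum_sub_distrib]
      exact sum_congr rfl fun a _ => by ring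
    intro a ha
    have hpos : 0 < ν - μ a := by linarith [hμ₁ a ha]
    have := (sum_eq_zero_iff_of_nonneg fun a _ =>
      mul_nonneg (sub_nonneg.mpr ((hμ₀ a).trans hν)) (sq_nonneg (b a))).mp hzero a (mem_univ a)
    simpa [hpos.ne'] using this
  have hsingle : ∀ y : ι → ℝ, v ⬝ᵥ y = b a₀ * (φ a₀ ⬝ᵥ y) := fun y => by
    rw [h.dotProduct_eq_sum,
      sum_eq_single a₀ (fun a _ ha => by simp [show φ a ⬝ᵥ v = 0 from hb a ha]) (by simp)]
  have hb₀ : b a₀ ≠ 0 := fun h₀ => hv (dotProduct_self_eq_zero.mp (by simp [hsingle, h₀]))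
  exact (mul_eq_zero.mp ((hsingle x).symm.trans hx)).resolve_left hb₀

end EigSystem

namespace SimpleGraph

variable {V : Type*} [Fintype V] [DecidableEq V] {G : SimpleGraph V} [DecidableRel G.Adj]

theorem IsRegularOfDegree.dotProduct_lapMatrix_mulVec {d : ℕ} (hreg : G.IsRegularOfDegree d)
    (x : V → ℝ) : x ⬝ᵥ G.lapMatrix ℝ *ᵥ x = d * (x ⬝ᵥ x) - x ⬝ᵥ G.adjMatrix ℝ *ᵥ x := by
  rw [lapMatrix, sub_mulVec, dotProduct_sub, dotProduct_mulVec_degMatrix]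
  simp only [hreg _, dotProduct, mul_sum, mul_assoc]

theorem dotProduct_lapMatrix_mulVec_le_card_mul (K : Finset V) {x : V → ℝ} (hK : ∀ v ∈ K, x v = 0)
    (hx : ∀ u v, u ∉ K → v ∉ K → G.Adj u v → x u = x v) :
    x ⬝ᵥ G.lapMatrix ℝ *ᵥ x ≤ #K * (x ⬝ᵥ x) := by
  have hedge : ∀ i j, (if G.Adj i j then (x i - x j) ^ 2 else 0) ≤
      (if j ∈ K then x i ^ 2 else 0) + (if i ∈ K then x j ^ 2 else 0) := by
    intro i j
    have hj₀ : 0 ≤ if j ∈ K then x i ^ 2 else 0 := by positivity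
    have hi₀ : 0 ≤ if i ∈ K then x j ^ 2 else 0 := by positivity
    by_cases hij : G.Adj i j
    swap
    · simp only [hij, if_false]; positivity
    rw [if_pos hij]
    by_cases hi : i ∈ K
    · have : (x i - x j) ^ 2 = x j ^ 2 := by rw [hK i hi, zero_sub, neg_sq]
      rw [if_pos hi]; linarith
    by_cases hj : j ∈ K
    · have : (x i - x j) ^ 2 = x i ^ 2 := by rw [hK j hj, sub_zero]
      rw [if_pos hj]; linarith
    · rw [if_neg hi, if_neg hj, hx i j hi hj hij, sub_self]; simp
  rw [← toLinearMap₂'_apply', lapMatrix_toLinearMap₂']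
  calc (∑ i, ∑ j, if G.Adj i j then (x i - x j) ^ 2 else 0) / 2
      ≤ (∑ i, ∑ j, ((if j ∈ K then x i ^ 2 else 0) + (if i ∈ K then x j ^ 2 else 0))) / 2 := by
        gcongr with i _ j _
        exact hedge i j
    _ = #K * (x ⬝ᵥ x) := by
        simp [sum_add_distrib, sum_ite_mem, dotProduct, ← sq, mul_sum]

theorem exists_vector_of_not_preconnected_induce (K : Finset V)
    (h : ¬ (G.induce {v | v ∉ K}).Preconnected) :
    ∃ x : V → ℝ, x ≠ 0 ∧ ∑ i, x i = 0 ∧ (∀ v ∈ K, x v = 0) ∧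
      ∀ u v, u ∉ K → v ∉ K → G.Adj u v → x u = x v := by
  set H := G.induce {v | v ∉ K}
  obtain ⟨u, w, huw⟩ : ∃ u w, ¬ H.Reachable u w := by simpa [Preconnected] using h
  set C : Finset V := {z | ∃ hz : z ∉ K, H.Reachable u ⟨z, hz⟩}
  have hC : ∀ z (hz : z ∉ K), z ∈ C ↔ H.Reachable u ⟨z, hz⟩ := fun z hz => by
    simp only [C, mem_filter, mem_univ, true_and]
    exact ⟨fun ⟨_, hr⟩ => hr, fun hr => ⟨hz, hr⟩⟩
  set x : V → ℝ := fun z => (if z ∈ C then (#Kᶜ : ℝ) else 0) - (if z ∈ Kᶜ then (#C : ℝ) else 0)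
  refine ⟨x, fun hx => ?_, ?_, fun v hv => ?_, fun v v' hv hv' hvv' => ?_⟩
  · have huC : (u : V) ∈ C := (hC u u.2).mpr .rfl
    have hwC : (w : V) ∉ C := fun hw => huw ((hC w w.2).mp hw)
    have hwK : (w : V) ∉ K := w.2
    have := congrFun hx w
    simp [x, hwC, hwK, Finset.card_pos.mpr ⟨_, huC⟩, ne_of_gt] at this
  · simp only [x, sum_sub_distrib, sum_ite_mem, univ_inter, sum_const, nsmul_eq_mul]
    ring
  · have hvC : v ∉ C := fun h' => (mem_filter.mp h').2.1 hv
    simp [x, hvC, hv]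
  · have hiff : v ∈ C ↔ v' ∈ C := by
      rw [hC v hv, hC v' hv']
      have hH : H.Reachable ⟨v, hv⟩ ⟨v', hv'⟩ :=
        (show H.Adj ⟨v, hv⟩ ⟨v', hv'⟩ from hvv').reachable
      exact ⟨fun hr => hr.trans hH, fun hr => hr.trans hH.symm⟩
    simp [x, hiff, hv, hv']

end SimpleGraph

theorem SimpleGraph.IsRegularOfDegree.one_sub_mul_le_dotProduct_lapMatrix_mulVec {V : Type}
    [Fintype V] [DecidableEq V] {G : SimpleGraph V} [DecidableRel G.Adj] {d k : ℕ}
    (hreg : G.IsRegularOfDegree d) (hd : 0 < d) (hk : 2 ≤ k) {μ : Fin k → ℝ} {φ : Fin k → V → ℝ}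
    (hA : EigSystem ((d : ℝ)⁻¹ • G.adjMatrix ℝ) μ φ) {x : V → ℝ} (hx : ∑ i, x i = 0) :
    (1 - μ ⟨1, hk⟩) * d * (x ⬝ᵥ x) ≤ x ⬝ᵥ G.lapMatrix ℝ *ᵥ x := by
  set M := (d : ℝ)⁻¹ • G.adjMatrix ℝ
  have hd' : (0 : ℝ) < d := by exact_mod_cast hd
  have hadj : ∀ y, y ⬝ᵥ G.adjMatrix ℝ *ᵥ y = d * (y ⬝ᵥ M *ᵥ y) := fun y => by
    rw [smul_mulVec, dotProduct_smul, smul_eq_mul, ← mul_assoc, mul_inv_cancel₀ hd'.ne', one_mul]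
  have hM₁ : M *ᵥ 1 = (1 : ℝ) • 1 := by
    ext i
    simp [M, smul_mulVec, hreg i, hd'.ne']
  have hμ₀ : μ ⟨0, by omega⟩ ≤ 1 := by
    set a : Fin k := ⟨0, by omega⟩
    have hφ : φ a ⬝ᵥ φ a = 1 := by simpa [dotProduct] using hA.2.1 a a
    have : 0 ≤ φ a ⬝ᵥ G.lapMatrix ℝ *ᵥ φ a := by
      simpa using (G.posSemidef_lapMatrix ℝ).dotProduct_mulVec_nonneg (φ a)
    rw [hreg.dotProduct_lapMatrix_mulVec, hadj, hA.2.2.1, dotProduct_smul, smul_eq_mul, hφ] at this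
    nlinarith
  have : Nonempty V := Fintype.card_pos_iff.mp (by rw [hA.1]; omega)
  have hle := hA.dotProduct_mulVec_le_of_dotProduct_eq_zero hk one_ne_zero hM₁ hμ₀
    (by rwa [one_dotProduct])
  rw [hreg.dotProduct_lapMatrix_mulVec, hadj]
  nlinarith [mul_le_mul_of_nonneg_left hle hd'.le]

/-- Every `(d,λ)`-expander graph `G` (an undirected connected
`d`-regular graph with spectral expansion at most `λ`) has vertex connectivity
`κ(G) ≥ (1 − λ) d`: every vertex cut `K` (a set of vertices whose removal
disconnects `G` or leaves at most one vertex) has size at least `(1 − λ) d`. -/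
theorem stmt_7 (n d : ℕ) (hd : 0 < d) (hn : 2 ≤ n)
    (G : SimpleGraph (Fin n)) [DecidableRel G.Adj]
    (hreg : G.IsRegularOfDegree d)
    (μ : Fin n → ℝ) (φ : Fin n → Fin n → ℝ)
    (hA : EigSystem ((d : ℝ)⁻¹ • G.adjMatrix ℝ) μ φ)
    (lam : ℝ) (hlam : max |μ ⟨1, by omega⟩| |μ ⟨n - 1, by omega⟩| ≤ lam)
    (K : Finset (Fin n))
    (hcut : ¬ (G.induce {v : Fin n | v ∉ K}).Connected ∨ Kᶜ.card ≤ 1) :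
    (1 - lam) * d ≤ (K.card : ℝ) := by
  have hμ₁ : |μ ⟨1, by omega⟩| ≤ lam := (le_max_left _ _).trans hlam
  by_cases hK : #Kᶜ ≤ 1
  · have hdn : d < n := by simpa [hreg _] using G.degree_lt_card_verts ⟨0, by omega⟩
    have hdK : d ≤ #K := by
      have := card_compl K
      simp only [Fintype.card_fin] at this
      omega
    have hd' : (d : ℝ) ≤ #K := by exact_mod_cast hdK
    nlinarith [abs_nonneg (μ ⟨1, by omega⟩)]
  have hKc : Nonempty {v : Fin n | v ∉ K} := by
    obtain ⟨v, hv⟩ := card_pos.mp (show 0 < #Kᶜ by omega)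
    exact ⟨⟨v, mem_compl.mp hv⟩⟩
  have hpre : ¬ (G.induce {v : Fin n | v ∉ K}).Preconnected := fun hpre =>
    hcut.resolve_right hK ⟨hpre⟩
  obtain ⟨x, hx₀, hsum, hxK, hloc⟩ := SimpleGraph.exists_vector_of_not_preconnected_induce K hpre
  have hpos : 0 < x ⬝ᵥ x := by simpa using dotProduct_self_star_pos_iff.mpr hx₀
  refine le_of_mul_le_mul_right ?_ hpos
  calc (1 - lam) * d * (x ⬝ᵥ x) ≤ (1 - μ ⟨1, hn⟩) * d * (x ⬝ᵥ x) := by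
        gcongr
        exact (le_abs_self _).trans hμ₁
    _ ≤ x ⬝ᵥ G.lapMatrix ℝ *ᵥ x := hreg.one_sub_mul_le_dotProduct_lapMatrix_mulVec hd hn hA hsum
    _ ≤ #K * (x ⬝ᵥ x) := SimpleGraph.dotProduct_lapMatrix_mulVec_le_card_mul K hxK hloc
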